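/- Let ω be a primitive cube root of unity in ℂ and let a, b be nonzero complex numbers with |ab| < 1. Then f(ωa, ωb) = f(a⁶b³, a³b⁶) + ω·a·f(a⁹b⁶, b³) + ω·a³b·f(a¹²b⁹, a⁻³), where a⁻³ denotes the integer power (−3) of the nonzero complex number a. -/

import Mathlib

/-!
Split the series for `f(ωa, ωb)` according to `n mod 3`. Scaling both arguments by `ω` multiplies
the `n`-th term by `ω ^ n²`, which depends only on `n mod 3` because `ω³ = 1`. On the class
`n = 3m + r` both exponents `n(n ± 1)/2` are `9 · m(m+1)/2` plus a linear function of `m`, so the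
class regroups into `a^(r(r+1)/2) b^(r(r-1)/2) f(A_r, B_r)` with `A_r B_r = (ab)⁹`.
The rearrangement is justified by absolute convergence: for `a = e^α`, `b = e^β` the series is
Jacobi's `θ₂` series with `πiτ = (α + β)/2`, and `Im τ > 0` is `|ab| < 1`.
-/

/-- Ramanujan's theta function `f(a,b) = ∑_{n ∈ ℤ} a^(n(n+1)/2) * b^(n(n-1)/2)`. -/
noncomputable def ramanujanTheta (a b : ℂ) : ℂ :=
  ∑' n : ℤ, a ^ (n * (n + 1) / 2) * b ^ (n * (n - 1) / 2)

open Complex Real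

theorem tsum_int_eq_sum_tsum_mul_add {α : Type*} [AddCommGroup α] [UniformSpace α]
    [IsUniformAddGroup α] [CompleteSpace α] [T2Space α] {f : ℤ → α} (hf : Summable f)
    (k : ℕ) [NeZero k] : ∑' n, f n = ∑ r : Fin k, ∑' m : ℤ, f (m * k + r) := by
  let e : Fin k × ℤ ≃ ℤ := (Equiv.prodComm _ _).trans (Int.divModEquiv k).symm
  have he : Summable fun p => f (e p) := e.summable_iff.mpr hf
  rw [← e.tsum_eq, he.tsum_prod' fun r => he.comp_injective (Prod.mk_right_injective r),
    tsum_fintype]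
  rfl

namespace Int

theorem two_mul_mul_add_one_ediv_two (n : ℤ) : 2 * (n * (n + 1) / 2) = n * (n + 1) :=
  Int.mul_ediv_cancel' (even_iff_two_dvd.mp (Int.even_mul_succ_self n))

theorem mul_sub_one_ediv_two (n : ℤ) : n * (n - 1) / 2 = n * (n + 1) / 2 - n :=
  Int.ediv_eq_of_eq_mul_left two_ne_zero
    (by linear_combination (-1 : ℤ) * two_mul_mul_add_one_ediv_two n)

theorem mul_three_add_mul_add_one_ediv_two (m r : ℤ) :
    (m * 3 + r) * (m * 3 + r + 1) / 2 =
      9 * (m * (m + 1) / 2) + 3 * (r - 1) * m + r * (r + 1) / 2 :=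
  Int.ediv_eq_of_eq_mul_left two_ne_zero <| by
    linear_combination (-9 : ℤ) * two_mul_mul_add_one_ediv_two m - two_mul_mul_add_one_ediv_two r

end Int

theorem zpow_mul_three_add_sq {G₀ : Type*} [GroupWithZero G₀] {ω : G₀} (hω : ω ^ 3 = 1)
    (m r : ℤ) : ω ^ ((m * 3 + r) ^ 2) = ω ^ (r ^ 2) := by
  have hω0 : ω ≠ 0 := by rintro rfl; norm_num at hω
  rw [show (m * 3 + r) ^ 2 = 3 * (3 * m ^ 2 + 2 * m * r) + r ^ 2 by ring, zpow_add₀ hω0,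
    zpow_mul, zpow_ofNat, hω, one_zpow, one_mul]

def ramanujanThetaTerm {K : Type*} [Field K] (a b : K) (n : ℤ) : K :=
  a ^ (n * (n + 1) / 2) * b ^ (n * (n - 1) / 2)

section Field

variable {K : Type*} [Field K]

theorem zpow_mul_zpow_mul_zpow_mul_zpow {a b : K} (ha : a ≠ 0) (hb : b ≠ 0) (i j k l : ℤ) :
    a ^ i * b ^ j * (a ^ k * b ^ l) = a ^ (i + k) * b ^ (j + l) := by
  rw [zpow_add₀ ha, zpow_add₀ hb]
  ring

theorem ramanujanThetaTerm_mul_mul {c : K} (hc : c ≠ 0) (a b : K) (n : ℤ) :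
    ramanujanThetaTerm (c * a) (c * b) n = c ^ (n ^ 2) * ramanujanThetaTerm a b n := by
  rw [ramanujanThetaTerm, ramanujanThetaTerm, mul_zpow, mul_zpow, Int.mul_sub_one_ediv_two,
    show n ^ 2 = n * (n + 1) / 2 + (n * (n + 1) / 2 - n) by
      linear_combination (-1 : ℤ) * Int.two_mul_mul_add_one_ediv_two n, zpow_add₀ hc]
  ring

theorem ramanujanThetaTerm_mul_three_add {a b : K} (ha : a ≠ 0) (hb : b ≠ 0) (m r : ℤ) :
    ramanujanThetaTerm a b (m * 3 + r) =
      a ^ (r * (r + 1) / 2) * b ^ (r * (r - 1) / 2) *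
        ramanujanThetaTerm (a ^ (6 + 3 * r) * b ^ (3 + 3 * r))
          (a ^ (3 * (1 - r)) * b ^ (3 * (2 - r))) m := by
  simp only [ramanujanThetaTerm, mul_zpow, ← zpow_mul, zpow_mul_zpow_mul_zpow_mul_zpow ha hb,
    Int.mul_sub_one_ediv_two, Int.mul_three_add_mul_add_one_ediv_two]
  congr 2 <;> ring

end Field

theorem ramanujanThetaTerm_eq_jacobiTheta₂_term {a b : ℂ} (ha : a ≠ 0) (hb : b ≠ 0) (n : ℤ) :
    ramanujanThetaTerm a b n =
      jacobiTheta₂_term n ((log a - log b) / (4 * π * I)) ((log a + log b) / (2 * π * I)) := by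
  have hT : (2 : ℂ) * ((n * (n + 1) / 2 : ℤ) : ℂ) = n * (n + 1) := by
    exact_mod_cast Int.two_mul_mul_add_one_ediv_two n
  rw [jacobiTheta₂_term, show 2 * π * I * n * ((log a - log b) / (4 * π * I)) +
      π * I * n ^ 2 * ((log a + log b) / (2 * π * I)) =
      ((n * (n + 1) / 2 : ℤ) : ℂ) * log a + ((n * (n + 1) / 2 - n : ℤ) : ℂ) * log b by
    push_cast
    field_simp
    linear_combination (-4) * (log a + log b) * hT,
    Complex.exp_add, exp_int_mul, exp_int_mul, exp_log ha, exp_log hb, ramanujanThetaTerm,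
    Int.mul_sub_one_ediv_two]

theorem summable_ramanujanThetaTerm {a b : ℂ} (ha : a ≠ 0) (hb : b ≠ 0) (hab : ‖a * b‖ < 1) :
    Summable (ramanujanThetaTerm a b) := by
  have hre : (log a + log b).re < 0 := by
    rw [add_re, log_re, log_re,
      ← Real.log_mul (norm_ne_zero_iff.mpr ha) (norm_ne_zero_iff.mpr hb), ← norm_mul]
    exact Real.log_neg (norm_pos_iff.mpr (mul_ne_zero ha hb)) hab
  have hτ : 0 < ((log a + log b) / (2 * π * I)).im := by
    rw [show (2 * π * I : ℂ) = I * (2 * π : ℝ) by push_cast; ring, ← div_div, div_ofReal_im,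
      div_I, neg_im, mul_I_im]
    exact div_pos (neg_pos.mpr hre) two_pi_pos
  exact ((summable_jacobiTheta₂_term_iff _ _).mpr hτ).congr fun n =>
    (ramanujanThetaTerm_eq_jacobiTheta₂_term ha hb n).symm

theorem tsum_ramanujanThetaTerm_mul_mul_three_add {ω a b : ℂ} (hω : ω ^ 3 = 1) (ha : a ≠ 0)
    (hb : b ≠ 0) (r : ℤ) :
    ∑' m : ℤ, ramanujanThetaTerm (ω * a) (ω * b) (m * 3 + r) =
      ω ^ (r ^ 2) * a ^ (r * (r + 1) / 2) * b ^ (r * (r - 1) / 2) *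
        ramanujanTheta (a ^ (6 + 3 * r) * b ^ (3 + 3 * r))
          (a ^ (3 * (1 - r)) * b ^ (3 * (2 - r))) := by
  have hω0 : ω ≠ 0 := by rintro rfl; norm_num at hω
  simp only [ramanujanThetaTerm_mul_mul hω0, zpow_mul_three_add_sq hω,
    ramanujanThetaTerm_mul_three_add ha hb, mul_assoc, tsum_mul_left]
  rfl

theorem theta_cubic_transform_explicit (ω a b : ℂ) (hω : IsPrimitiveRoot ω 3)
    (ha : a ≠ 0) (hb : b ≠ 0) (hab : ‖a * b‖ < 1) :
    ramanujanTheta (ω * a) (ω * b) =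
      ramanujanTheta (a ^ 6 * b ^ 3) (a ^ 3 * b ^ 6) +
        ω * a * ramanujanTheta (a ^ 9 * b ^ 6) (b ^ 3) +
        ω * (a ^ 3 * b) * ramanujanTheta (a ^ 12 * b ^ 9) (a ^ (-3 : ℤ)) := by
  have hω0 : ω ≠ 0 := hω.ne_zero three_ne_zero
  have hωab : ‖ω * a * (ω * b)‖ < 1 := by
    rwa [mul_mul_mul_comm, norm_mul, norm_mul ω, hω.norm'_eq_one three_ne_zero, one_mul, one_mul]
  have hsum := summable_ramanujanThetaTerm (mul_ne_zero hω0 ha) (mul_ne_zero hω0 hb) hωab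
  have hω4 : ω ^ 4 = ω := by rw [pow_succ, hω.pow_eq_one, one_mul]
  change ∑' n, ramanujanThetaTerm (ω * a) (ω * b) n = _
  rw [tsum_int_eq_sum_tsum_mul_add hsum 3, Fin.sum_univ_three]
  simp only [Nat.cast_ofNat, Fin.isValue, Fin.val_zero, Nat.cast_zero, Fin.val_one, Nat.cast_one,
    Fin.val_two, tsum_ramanujanThetaTerm_mul_mul_three_add hω.pow_eq_one ha hb]
  norm_num [hω4, mul_assoc]
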